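/- Let ρ be an n×n density matrix, let A, B be n×n self-adjoint complex matrices, and let q ∈ ℝ. Then (1/(1+|q|)²)·|Tr[ρ[A₀,B₀]_{|q|}]|² ≤ V_ρ(A)·V_ρ(B). -/

import Mathlib

/-!
With `ρ` positive semidefinite, `(X, Y) ↦ Tr[Y ρ Xᴴ]` is a semi-inner product on matrices
(`Matrix.toMatrixInnerProductSpace`); on Hermitian matrices it is `Tr[ρ X Y]`. Cauchy–Schwarz
therefore gives `|Tr[ρ A₀ B₀]|² ≤ Tr[ρ A₀²] Tr[ρ B₀²] = V_ρ(A) V_ρ(B)`. Since `ρ`, `A₀`, `B₀` are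
Hermitian, `Tr[ρ B₀ A₀]` is the conjugate of `c = Tr[ρ A₀ B₀]`, so the trace of the
`|q|`-commutator is `c - |q| c̄`, of modulus at most `(1 + |q|) |c|`.
-/

open Matrix ComplexOrder

/-- `A₀ = A - Tr[ρA]·I`, the centered operator. -/
noncomputable def shift {n : ℕ} (ρ A : Matrix (Fin n) (Fin n) ℂ) : Matrix (Fin n) (Fin n) ℂ :=
  A - (ρ * A).trace • (1 : Matrix (Fin n) (Fin n) ℂ)

/-- `V_ρ(A) = Tr[ρA²] - (Tr[ρA])²` (a real number for self-adjoint `A` and density `ρ`). -/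
noncomputable def variance {n : ℕ} (ρ A : Matrix (Fin n) (Fin n) ℂ) : ℝ :=
  ((ρ * (A * A)).trace - ((ρ * A).trace) ^ 2).re

/-- the q-commutator `[A,B]_q = AB - q·BA`. -/
noncomputable def qComm {n : ℕ} (q : ℝ) (A B : Matrix (Fin n) (Fin n) ℂ) :
    Matrix (Fin n) (Fin n) ℂ :=
  A * B - (q : ℂ) • (B * A)

/-- the q-anti-commutator `{A,B}_q = AB + q·BA`. -/
noncomputable def qAnti {n : ℕ} (q : ℝ) (A B : Matrix (Fin n) (Fin n) ℂ) :
    Matrix (Fin n) (Fin n) ℂ :=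
  A * B + (q : ℂ) • (B * A)

theorem Matrix.PosSemidef.norm_trace_mul_mul_conjTranspose_sq_le {n 𝕜 : Type*} [Fintype n]
    [RCLike 𝕜] {M : Matrix n n 𝕜} (hM : M.PosSemidef) (X Y : Matrix n n 𝕜) :
    ‖(Y * M * Xᴴ).trace‖ ^ 2 ≤
      RCLike.re (X * M * Xᴴ).trace * RCLike.re (Y * M * Yᴴ).trace := by
  let := M.toMatrixSeminormedAddCommGroup hM
  let := M.toMatrixInnerProductSpace hM
  have h := inner_mul_inner_self_le (𝕜 := 𝕜) X Y
  rw [norm_inner_symm Y X, ← sq] at h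
  exact h

theorem trace_mul_qComm {n : ℕ} {ρ X Y : Matrix (Fin n) (Fin n) ℂ} (hρ : ρ.IsHermitian)
    (hX : X.IsHermitian) (hY : Y.IsHermitian) (q : ℝ) :
    (ρ * qComm q X Y).trace = (ρ * (X * Y)).trace - q * star (ρ * (X * Y)).trace := by
  rw [qComm, Matrix.mul_sub, Matrix.mul_smul, trace_sub, trace_smul, smul_eq_mul,
    ← trace_conjTranspose, conjTranspose_mul, conjTranspose_mul, hX.eq, hY.eq, hρ.eq,
    trace_mul_comm (Y * X) ρ]

theorem norm_trace_mul_qComm_le {n : ℕ} {ρ X Y : Matrix (Fin n) (Fin n) ℂ} (hρ : ρ.IsHermitian)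
    (hX : X.IsHermitian) (hY : Y.IsHermitian) (q : ℝ) :
    ‖(ρ * qComm q X Y).trace‖ ≤ (1 + |q|) * ‖(ρ * (X * Y)).trace‖ := by
  rw [trace_mul_qComm hρ hX hY]
  calc _ ≤ ‖(ρ * (X * Y)).trace‖ + ‖(q : ℂ) * star (ρ * (X * Y)).trace‖ := norm_sub_le _ _
    _ = _ := by rw [norm_mul, norm_star, Complex.norm_real, Real.norm_eq_abs]; ring

theorem isHermitian_shift {n : ℕ} {ρ A : Matrix (Fin n) (Fin n) ℂ} (hρ : ρ.IsHermitian)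
    (hA : A.IsHermitian) : (shift ρ A).IsHermitian := by
  have : star (ρ * A).trace = (ρ * A).trace := by
    rw [← trace_conjTranspose, conjTranspose_mul, hA.eq, hρ.eq, trace_mul_comm]
  rw [IsHermitian, shift, conjTranspose_sub, hA.eq, conjTranspose_smul, conjTranspose_one, this]

theorem variance_eq_re_trace_mul_shift_mul_shift {n : ℕ} {ρ : Matrix (Fin n) (Fin n) ℂ}
    (hρ : ρ.trace = 1) (A : Matrix (Fin n) (Fin n) ℂ) :
    variance ρ A = (ρ * (shift ρ A * shift ρ A)).trace.re := by
  simp only [variance, shift, Matrix.sub_mul, Matrix.mul_sub, Matrix.smul_mul, Matrix.mul_smul,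
    Matrix.one_mul, trace_sub, trace_smul, smul_eq_mul, hρ, mul_one]
  congr 1
  ring

theorem norm_trace_mul_mul_sq_le {n : ℕ} {ρ X Y : Matrix (Fin n) (Fin n) ℂ} (hρ : ρ.PosSemidef)
    (hX : X.IsHermitian) (hY : Y.IsHermitian) :
    ‖(ρ * (X * Y)).trace‖ ^ 2 ≤ (ρ * (X * X)).trace.re * (ρ * (Y * Y)).trace.re := by
  have h := hρ.norm_trace_mul_mul_conjTranspose_sq_le X Y
  have cycle : ∀ Z W : Matrix (Fin n) (Fin n) ℂ, (Z * ρ * W).trace = (ρ * (W * Z)).trace := by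
    intro Z W
    rw [Matrix.mul_assoc, trace_mul_comm, Matrix.mul_assoc]
  rwa [hX.eq, hY.eq, cycle, cycle, cycle] at h

/-- Uncertainty relation for the q-commutator:
`(1/(1+|q|)²)·|Tr[ρ[A₀,B₀]_{|q|}]|² ≤ V_ρ(A)·V_ρ(B)`. -/
theorem qcommutator_uncertainty {n : ℕ} (ρ A B : Matrix (Fin n) (Fin n) ℂ)
    (hρ : ρ.PosSemidef) (htr : ρ.trace = 1)
    (hA : A.IsHermitian) (hB : B.IsHermitian) (q : ℝ) :
    (1 / (1 + |q|) ^ 2) *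
        ‖(ρ * qComm |q| (shift ρ A) (shift ρ B)).trace‖ ^ 2 ≤
      variance ρ A * variance ρ B := by
  have hA₀ := isHermitian_shift hρ.isHermitian hA
  have hB₀ := isHermitian_shift hρ.isHermitian hB
  calc (1 / (1 + |q|) ^ 2) * ‖(ρ * qComm |q| (shift ρ A) (shift ρ B)).trace‖ ^ 2
      ≤ (1 / (1 + |q|) ^ 2) * ((1 + |q|) * ‖(ρ * (shift ρ A * shift ρ B)).trace‖) ^ 2 := by
        gcongr
        simpa only [abs_abs] using norm_trace_mul_qComm_le hρ.isHermitian hA₀ hB₀ |q|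
    _ = ‖(ρ * (shift ρ A * shift ρ B)).trace‖ ^ 2 := by field_simp
    _ ≤ (ρ * (shift ρ A * shift ρ A)).trace.re * (ρ * (shift ρ B * shift ρ B)).trace.re :=
        norm_trace_mul_mul_sq_le hρ hA₀ hB₀
    _ = variance ρ A * variance ρ B := by
        rw [variance_eq_re_trace_mul_shift_mul_shift htr,
          variance_eq_re_trace_mul_shift_mul_shift htr]
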